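/- Let $N$ beams meet at a joint with common rotational variations $\delta\Theta$ and increments $\Delta\Theta$, and let $m_i \in \mathbb{R}^3$ be the moment contributed by beam $i$ at the joint. If the moment equilibrium $\sum_{i=1}^N m_i = 0$ holds, then the total skew contribution $\sum_{i=1}^N \frac{1}{2} m_i \cdot (\delta\Theta \times \Delta\Theta) = 0$; i.e., the skew-symmetric part of the assembled geometric tangent stiffness vanishes at equilibrium. -/

import Mathlib

open Matrix

/-- At a joint connecting `N` beams with common rotational variation `δΘ` and
increment `ΔΘ`, if the moments `m i` contributed by the beams are in equilibrium
(`∑ m i = 0`), then the total skew-symmetric contribution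
`∑ᵢ ½ mᵢ ⋅ (δΘ × ΔΘ)` to the assembled geometric tangent stiffness vanishes. -/
theorem skew_geometric_stiffness_vanishes_at_equilibrium
    (N : ℕ) (m : Fin N → (Fin 3 → ℝ)) (δΘ ΔΘ : Fin 3 → ℝ)
    (heq : ∑ i, m i = 0) :
    ∑ i, (1 / 2 : ℝ) * (m i ⬝ᵥ (δΘ ⨯₃ ΔΘ)) = 0 := by
  rw [← Finset.mul_sum, ← sum_dotProduct, heq, zero_dotProduct, mul_zero]
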